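/- arXiv:1903.05632 — 5 statements merged into one kernel-verified Lean document; each statement's English description precedes it below -/
import Mathlib

section
/- Let X be a connected topological space and let C ⊆ X be a subset with empty interior. Suppose {V_i}_{i∈I} is an open cover of X such that V_i \ C is preconnected for every i ∈ I. Then X \ C is preconnected; moreover X \ C is nonempty whenever X is nonempty. -/
/-!
Since `C` has empty interior, `Cᶜ` is dense, so any two members of the cover that meet
still meet outside `C`. Connectedness of `X` links any two nonempty members of the cover by a
chain of overlapping members, and the preconnected pieces `V i \ C` glue along this chain.
-/

section

open Set Relation

variable {X ι : Type*} [TopologicalSpace X]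

theorem reflTransGen_inter_nonempty_of_isOpen_cover [PreconnectedSpace X] {V : ι → Set X}
    (hVopen : ∀ i, IsOpen (V i)) (hVcover : ⋃ i, V i = univ) {i j : ι}
    (hi : (V i).Nonempty) (hj : (V j).Nonempty) :
    ReflTransGen (fun k l => (V k ∩ V l).Nonempty) i j := by
  set R : ι → ι → Prop := fun k l => (V k ∩ V l).Nonempty
  set A : Set X := ⋃ k ∈ {k | ReflTransGen R i k}, V k
  -- The member of the cover containing a point of `closure A` meets `A`, so the chain extends to it.
  have hA_closed : IsClosed A := by
    refine isClosed_of_closure_subset fun x hx => ?_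
    obtain ⟨l, hxl⟩ := mem_iUnion.1 (hVcover ▸ mem_univ x)
    obtain ⟨y, hyl, hyA⟩ := mem_closure_iff.1 hx (V l) (hVopen l) hxl
    obtain ⟨k, hik, hyk⟩ := mem_iUnion₂.1 hyA
    exact mem_iUnion₂.2 ⟨l, hik.tail ⟨y, hyk, hyl⟩, hxl⟩
  have hA_univ : A = univ :=
    IsClopen.eq_univ ⟨hA_closed, isOpen_biUnion fun k _ => hVopen k⟩
      (hi.mono (subset_biUnion_of_mem (u := V) ReflTransGen.refl))
  obtain ⟨x, hxj⟩ := hj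
  obtain ⟨k, hik, hxk⟩ := mem_iUnion₂.1 (hA_univ ▸ mem_univ x)
  exact hik.tail ⟨x, hxk, hxj⟩

theorem Dense.isPreconnected_of_isOpen_cover [PreconnectedSpace X] {S : Set X} (hS : Dense S)
    {V : ι → Set X} (hVopen : ∀ i, IsOpen (V i)) (hVcover : ⋃ i, V i = univ)
    (hVS : ∀ i, IsPreconnected (V i ∩ S)) : IsPreconnected S := by
  have hS_eq : S = ⋃ i ∈ {i | (V i).Nonempty}, V i ∩ S := by
    refine Subset.antisymm (fun x hx => ?_) (iUnion₂_subset fun i _ => inter_subset_right)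
    obtain ⟨i, hxi⟩ := mem_iUnion.1 (hVcover ▸ mem_univ x)
    exact mem_iUnion₂.2 ⟨i, ⟨x, hxi⟩, hxi, hx⟩
  rw [hS_eq]
  refine IsPreconnected.biUnion_of_reflTransGen (fun i _ => hVS i) fun i hi j hj => ?_
  have h_overlap : ∀ k l, (V k ∩ V l).Nonempty →
      ((V k ∩ S) ∩ (V l ∩ S)).Nonempty ∧ k ∈ {i | (V i).Nonempty} := by
    intro k l hkl
    refine ⟨?_, hkl.mono inter_subset_left⟩
    obtain ⟨x, ⟨hxk, hxl⟩, hxS⟩ := hS.inter_open_nonempty _ ((hVopen k).inter (hVopen l)) hkl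
    exact ⟨x, ⟨hxk, hxS⟩, hxl, hxS⟩
  exact ReflTransGen.mono h_overlap i j
    (reflTransGen_inter_nonempty_of_isOpen_cover hVopen hVcover hi hj)

end

/-- Let `X` be a connected topological space and `C ⊆ X` a
subset with empty interior. Suppose `{V i}` is an open cover of `X` such that
`V i \ C` is preconnected for every `i`. Then `X \ C` is preconnected;
moreover `X \ C` is nonempty whenever `X` is nonempty. -/
theorem complement_preconnected_of_cover {X : Type*} [TopologicalSpace X] [ConnectedSpace X]
    (C : Set X) (hC : interior C = ∅)
    {I : Type*} (V : I → Set X) (hVopen : ∀ i, IsOpen (V i))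
    (hVcover : (⋃ i, V i) = Set.univ)
    (hVconn : ∀ i, IsPreconnected (V i \ C)) :
    IsPreconnected Cᶜ ∧ (Nonempty X → Cᶜ.Nonempty) := by
  have hdense : Dense Cᶜ := interior_eq_empty_iff_dense_compl.1 hC
  exact ⟨hdense.isPreconnected_of_isOpen_cover hVopen hVcover hVconn, fun _ => hdense.nonempty⟩
end

section
/- Let X be a nonempty connected topological space, N ∈ ℕ, and ν : X → ℕ a function with ν(x) ≤ N for all x ∈ X. Assume: (i) for every integer k ≥ 1 the level set {x ∈ X : ν(x) = k} has empty interior in X; (ii) every point p ∈ X has an open preconnected neighborhood V_p such that ν(q) ≤ ν(p) for all q ∈ V_p, and such that for every integer k with k ≥ ν(p) ≥ 1 the set V_p \ {x ∈ X : ν(x) = k} is preconnected. Then the set {x ∈ X : ν(x) = 0} is preconnected. -/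
/-- Let `X` be a nonempty connected topological space,
`N ∈ ℕ`, and `ν : X → ℕ` a function bounded by `N`. Assume (i) for every
`k ≥ 1` the level set `{x | ν x = k}` has empty interior, and (ii) every point
`p` has an open preconnected neighborhood `V` on which `ν ≤ ν p`, and such
that for every `k` with `k ≥ ν p ≥ 1` the set `V \ {x | ν x = k}` is
preconnected. Then `{x | ν x = 0}` is preconnected. -/
theorem regular_level_set_preconnected {X : Type*} [TopologicalSpace X] [ConnectedSpace X]
    (N : ℕ) (ν : X → ℕ) (hbound : ∀ x, ν x ≤ N)
    (hempty : ∀ k : ℕ, 1 ≤ k → interior {x | ν x = k} = ∅)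
    (hloc : ∀ p : X, ∃ V : Set X, IsOpen V ∧ p ∈ V ∧ IsPreconnected V ∧
      (∀ q ∈ V, ν q ≤ ν p) ∧
      (∀ k : ℕ, ν p ≤ k → 1 ≤ ν p → IsPreconnected (V \ {x | ν x = k}))) :
    IsPreconnected {x | ν x = 0} := by
  classical
  choose V hVopen hVmem hVpre hVle hVrem using hloc
  -- density of `{ν < k}` near any point with `ν x ≤ k`
  have hdense : ∀ k : ℕ, 1 ≤ k → ∀ x : X, ν x ≤ k → ∀ O : Set X, IsOpen O → x ∈ O →
      ∃ y ∈ O, ν y < k := by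
    intro k hk x hx O hO hxO
    by_contra h
    push_neg at h
    have hsub : O ∩ V x ⊆ {y | ν y = k} := by
      intro y ⟨hyO, hyV⟩
      have h1 : ν y ≤ k := le_trans (hVle x y hyV) hx
      have h2 := h y hyO
      show ν y = k
      omega
    have hopen : IsOpen (O ∩ V x) := hO.inter (hVopen x)
    have : O ∩ V x ⊆ interior {y | ν y = k} := hopen.subset_interior_iff.mpr hsub
    rw [hempty k hk] at this
    exact this ⟨hxO, hVmem x⟩ 
  -- the inductive step
  have step : ∀ k : ℕ, 1 ≤ k → IsPreconnected {x | ν x ≤ k} →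
      IsPreconnected {x | ν x < k} := by
    intro k hk hS
    rintro u v hu hv hcov ⟨a, haT, hau⟩ ⟨b, hbT, hbv⟩
    by_contra hne
    have hne' : ∀ y : X, ν y < k → y ∈ u → y ∈ v → False := by
      intro y h1 h2 h3; exact hne ⟨y, h1, h2, h3⟩
    have hTsub : {x | ν x < k} ⊆ u ∪ v := hcov
    -- each bad point's neighborhood (minus the level set) lies in u or in v
    have hside : ∀ p : X, ν p = k →
        (∀ y ∈ V p, ν y ≠ k → y ∈ u) ∨ (∀ y ∈ V p, ν y ≠ k → y ∈ v) := by
      intro p hp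
      have hpre : IsPreconnected (V p \ {x | ν x = k}) :=
        hVrem p k (le_of_eq hp) (by omega)
      have hsubT : V p \ {x | ν x = k} ⊆ {x | ν x < k} := by
        intro y ⟨hyV, hyk⟩
        have := hVle p y hyV
        simp only [Set.mem_setOf_eq] at hyk ⊢
        omega
      by_cases h1 : ((V p \ {x | ν x = k}) ∩ u).Nonempty
      · by_cases h2 : ((V p \ {x | ν x = k}) ∩ v).Nonempty
        · exfalso
          obtain ⟨y, hyVL, hyu, hyv⟩ := hpre u v hu hv (hsubT.trans hTsub) h1 h2
          exact hne' y (hsubT hyVL) hyu hyv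
        · left
          intro y hyV hyk
          rcases hTsub (hsubT ⟨hyV, hyk⟩) with h | h
          · exact h
          · exact absurd ⟨y, ⟨hyV, hyk⟩, h⟩ h2
      · right
        intro y hyV hyk
        rcases hTsub (hsubT ⟨hyV, hyk⟩) with h | h
        · exact absurd ⟨y, ⟨hyV, hyk⟩, h⟩ h1
        · exact h
    -- enlarged open sets
    set u' := u ∪ ⋃ p ∈ {p : X | ν p = k ∧ ∀ y ∈ V p, ν y ≠ k → y ∈ u}, V p with hu'def
    set v' := v ∪ ⋃ p ∈ {p : X | ν p = k ∧ ∀ y ∈ V p, ν y ≠ k → y ∈ v}, V p with hv'def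
    have hu' : IsOpen u' := hu.union (isOpen_biUnion fun p _ => hVopen p)
    have hv' : IsOpen v' := hv.union (isOpen_biUnion fun p _ => hVopen p)
    have hcov' : {x | ν x ≤ k} ⊆ u' ∪ v' := by
      intro x hx
      rcases lt_or_eq_of_le (show ν x ≤ k from hx) with h | h
      · rcases hTsub h with h' | h'
        · exact Or.inl (Or.inl h')
        · exact Or.inr (Or.inl h')
      · rcases hside x h with hs | hs
        · exact Or.inl (Or.inr (Set.mem_biUnion ⟨h, hs⟩ (hVmem x)))
        · exact Or.inr (Or.inr (Set.mem_biUnion ⟨h, hs⟩ (hVmem x)))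
    obtain ⟨c, hcS, hcu', hcv'⟩ := hS u' v' hu' hv' hcov'
      ⟨a, show ν a ≤ k from le_of_lt haT, Or.inl hau⟩ ⟨b, show ν b ≤ k from le_of_lt hbT, Or.inl hbv⟩
    -- extract open sets around c mapping into u resp. v away from the level set
    have key : ∀ w : Set X, IsOpen w →
        c ∈ w ∪ ⋃ p ∈ {p : X | ν p = k ∧ ∀ y ∈ V p, ν y ≠ k → y ∈ w}, V p →
        ∃ O : Set X, IsOpen O ∧ c ∈ O ∧ ∀ y ∈ O, ν y ≠ k → y ∈ w := by
      intro w hw hc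
      rcases hc with hc | hc
      · exact ⟨w, hw, hc, fun y hy _ => hy⟩
      · obtain ⟨p, hp, hcV⟩ := Set.mem_iUnion₂.mp hc
        exact ⟨V p, hVopen p, hcV, hp.2⟩
    obtain ⟨Ou, hOu, hcOu, hOuu⟩ := key u hu hcu'
    obtain ⟨Ov, hOv, hcOv, hOvv⟩ := key v hv hcv'
    obtain ⟨y, ⟨hyOu, hyOv⟩, hy⟩ :=
      hdense k hk c hcS (Ou ∩ Ov) (hOu.inter hOv) ⟨hcOu, hcOv⟩
    exact hne' y hy (hOuu y hyOu (by omega)) (hOvv y hyOv (by omega))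
  -- downward induction
  have main : ∀ d : ℕ, IsPreconnected {x | ν x ≤ N - d} := by
    intro d
    induction d with
    | zero =>
      have h : {x : X | ν x ≤ N - 0} = Set.univ := by
        ext x; simpa using hbound x
      rw [h]; exact isPreconnected_univ
    | succ d ih =>
      rcases Nat.eq_zero_or_pos (N - d) with h | h
      · have h1 : {x : X | ν x ≤ N - (d + 1)} = {x : X | ν x ≤ N - d} := by
          ext x; simp only [Set.mem_setOf_eq]; omega
        rw [h1]; exact ih
      · have h1 : {x : X | ν x ≤ N - (d + 1)} = {x : X | ν x < N - d} := by
          ext x; simp only [Set.mem_setOf_eq]; omega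
        rw [h1]; exact step (N - d) h ih
  have h0 : {x : X | ν x = 0} = {x : X | ν x ≤ N - N} := by
    ext x; simp [Nat.sub_self, Nat.le_zero]
  rw [h0]; exact main N
end

section
/- Let λ₁,…,λ_d ∈ ℝⁿ be vectors that span ℝⁿ over ℝ, and let L ∈ ℝ^d. Set Δ = {x ∈ ℝⁿ : ⟨x, λ_i⟩ ≤ L_i for i = 1,…,d} and X = {z ∈ ℂ^d : there exists x ∈ ℝⁿ with π|z_i|² = L_i − ⟨x, λ_i⟩ for i = 1,…,d}. Then: (a) for each z ∈ X the point x ∈ ℝⁿ satisfying π|z_i|² = L_i − ⟨x, λ_i⟩ for all i is unique, so z ↦ x defines a map f : X → ℝⁿ; (b) f is continuous and f(X) = Δ; (c) X is a closed subset of ℂ^d, and if Δ is compact then X is compact; (d) X is nonempty if and only if Δ is nonempty. -/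
open Real

/-- The linear map `x ↦ (∑ j, x j * lam i j)ᵢ`. -/
noncomputable def delzantA (n d : ℕ) (lam : Fin d → (Fin n → ℝ)) :
    (Fin n → ℝ) →ₗ[ℝ] (Fin d → ℝ) where
  toFun x i := ∑ j, x j * lam i j
  map_add' x y := by
    funext i
    simp [add_mul, Finset.sum_add_distrib]
  map_smul' c x := by
    funext i
    simp [Finset.mul_sum, mul_assoc]

theorem delzantA_inj (n d : ℕ) (lam : Fin d → (Fin n → ℝ))
    (hspan : Submodule.span ℝ (Set.range lam) = ⊤) :
    Function.Injective (delzantA n d lam) := by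
  rw [← LinearMap.ker_eq_bot, LinearMap.ker_eq_bot']
  intro x hx
  have hmem : ∀ y ∈ Submodule.span ℝ (Set.range lam), ∑ j, x j * y j = 0 := by
    intro y hy
    induction hy using Submodule.span_induction with
    | mem y hy =>
        obtain ⟨i, rfl⟩ := hy
        exact congrFun hx i
    | zero => simp
    | add y z hy hz ihy ihz => simp [mul_add, Finset.sum_add_distrib, ihy, ihz]
    | smul c y hy ih =>
        have : ∑ j, x j * (c * y j) = c * ∑ j, x j * y j := by
          rw [Finset.mul_sum]; exact Finset.sum_congr rfl (fun j _ => by ring)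
        simp [Pi.smul_apply, smul_eq_mul, this, ih]
  have hxx : ∑ j, x j * x j = 0 := hmem x (by rw [hspan]; trivial)
  funext j
  have := (Finset.sum_eq_zero_iff_of_nonneg
    (fun j _ => mul_self_nonneg (x j))).mp hxx j (Finset.mem_univ j)
  have := mul_self_eq_zero.mp this
  simpa using this

/-- Let `λ₁, …, λ_d ∈ ℝⁿ` span `ℝⁿ` and let `L ∈ ℝ^d`. Set
`Δ = {x ∈ ℝⁿ | ⟨x, λᵢ⟩ ≤ Lᵢ ∀ i}` and
`X = {z ∈ ℂ^d | ∃ x ∈ ℝⁿ, π|zᵢ|² = Lᵢ - ⟨x, λᵢ⟩ ∀ i}`. Then: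
(a) for each `z ∈ X` the corresponding `x` is unique, defining a map
`f : X → ℝⁿ`; (b) `f` is continuous and `f(X) = Δ`; (c) `X` is closed, and
compact whenever `Δ` is compact; (d) `X` is nonempty iff `Δ` is nonempty. -/
theorem delzant_level_set (n d : ℕ) (lam : Fin d → (Fin n → ℝ))
    (hspan : Submodule.span ℝ (Set.range lam) = ⊤) (L : Fin d → ℝ) :
    let Δ : Set (Fin n → ℝ) := {x | ∀ i, (∑ j, x j * lam i j) ≤ L i}
    let X : Set (Fin d → ℂ) :=
      {z | ∃ x : Fin n → ℝ, ∀ i, π * ‖z i‖ ^ 2 = L i - ∑ j, x j * lam i j}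
    (∀ z ∈ X, ∃! x : Fin n → ℝ, ∀ i, π * ‖z i‖ ^ 2 = L i - ∑ j, x j * lam i j) ∧
    (∃ f : X → (Fin n → ℝ), Continuous f ∧
      (∀ z : X, ∀ i, π * ‖(z : Fin d → ℂ) i‖ ^ 2 = L i - ∑ j, f z j * lam i j) ∧
      Set.range f = Δ) ∧
    IsClosed X ∧ (IsCompact Δ → IsCompact X) ∧ (X.Nonempty ↔ Δ.Nonempty) := by
  intro Δ X
  classical
  set A := delzantA n d lam with hAdef
  have hA : ∀ x i, A x i = ∑ j, x j * lam i j := fun x i => rfl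
  have hAinj : Function.Injective A := delzantA_inj n d lam hspan
  -- left inverse
  obtain ⟨g, hg⟩ := LinearMap.exists_leftInverse_of_injective A
    (LinearMap.ker_eq_bot.mpr hAinj)
  have hgA : ∀ x, g (A x) = x := fun x => LinearMap.congr_fun hg x
  -- the continuous map v
  set v : (Fin d → ℂ) → (Fin d → ℝ) := fun z i => L i - π * ‖z i‖ ^ 2 with hv
  have hvcont : Continuous v := by
    refine continuous_pi fun i => Continuous.sub continuous_const ?_
    exact continuous_const.mul (((continuous_apply i).norm).pow 2)
  -- membership characterization
  have hmemX : ∀ z : Fin d → ℂ, ∀ x : Fin n → ℝ,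
      (∀ i, π * ‖z i‖ ^ 2 = L i - ∑ j, x j * lam i j) ↔ v z = A x := by
    intro z x
    constructor
    · intro h; funext i; have := h i
      simp only [hv, hA]
      linarith
    · intro h i
      have := congrFun h i
      simp only [hv, hA] at this
      linarith
  -- uniqueness (a)
  have ha : ∀ z ∈ X, ∃! x : Fin n → ℝ,
      ∀ i, π * ‖z i‖ ^ 2 = L i - ∑ j, x j * lam i j := by
    rintro z ⟨x, hx⟩
    refine ⟨x, hx, fun y hy => ?_⟩
    exact hAinj (((hmemX z y).mp hy).symm.trans ((hmemX z x).mp hx))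
  -- the map f
  set f : X → (Fin n → ℝ) := fun z => g (v (z : Fin d → ℂ)) with hf
  have hfspec : ∀ z : X, ∀ x : Fin n → ℝ,
      (∀ i, π * ‖(z : Fin d → ℂ) i‖ ^ 2 = L i - ∑ j, x j * lam i j) → f z = x := by
    intro z x hx
    have := (hmemX _ x).mp hx
    simp [hf, this, hgA]
  have hfprop : ∀ z : X, ∀ i,
      π * ‖(z : Fin d → ℂ) i‖ ^ 2 = L i - ∑ j, f z j * lam i j := by
    rintro ⟨z, x, hx⟩ i
    rw [hfspec ⟨z, x, hx⟩ x hx]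
    exact hx i
  have hfcont : Continuous f := by
    have hgc : Continuous g := g.continuous_of_finiteDimensional
    exact hgc.comp (hvcont.comp continuous_subtype_val)
  -- construction of points of X from points of Δ
  have hconstruct : ∀ x ∈ Δ, ∃ z : Fin d → ℂ,
      ∀ i, π * ‖z i‖ ^ 2 = L i - ∑ j, x j * lam i j := by
    intro x hx
    refine ⟨fun i => (Real.sqrt ((L i - ∑ j, x j * lam i j) / π) : ℂ), fun i => ?_⟩
    have ht : 0 ≤ (L i - ∑ j, x j * lam i j) / π :=
      div_nonneg (by have := hx i; linarith) pi_pos.le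
    rw [Complex.norm_real, Real.norm_eq_abs, abs_of_nonneg (Real.sqrt_nonneg _),
      Real.sq_sqrt ht]
    field_simp
  -- range f = Δ
  have hrange : Set.range f = Δ := by
    apply Set.eq_of_subset_of_subset
    · rintro _ ⟨z, rfl⟩ i
      have := hfprop z i
      have hnn : 0 ≤ π * ‖(z : Fin d → ℂ) i‖ ^ 2 :=
        mul_nonneg pi_pos.le (sq_nonneg _)
      linarith
    · intro x hx
      obtain ⟨z, hz⟩ := hconstruct x hx
      exact ⟨⟨z, x, hz⟩, hfspec ⟨z, x, hz⟩ x hz⟩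
  -- X closed
  have hXeq : X = v ⁻¹' (LinearMap.range A : Set (Fin d → ℝ)) := by
    ext z
    simp only [Set.mem_setOf_eq, Set.mem_preimage, SetLike.mem_coe,
      LinearMap.mem_range, X]
    constructor
    · rintro ⟨x, hx⟩; exact ⟨x, ((hmemX z x).mp hx).symm⟩
    · rintro ⟨x, hx⟩; exact ⟨x, (hmemX z x).mpr hx.symm⟩
  have hXclosed : IsClosed X := by
    rw [hXeq]
    exact (Submodule.closed_of_finiteDimensional _).preimage hvcont
  -- compactness
  have hXcompact : IsCompact Δ → IsCompact X := by
    intro hΔ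
    obtain ⟨C, hC⟩ := hΔ.exists_bound_of_continuousOn
      (f := fun x => A x) (A.continuous_of_finiteDimensional.continuousOn)
    rw [Metric.isCompact_iff_isClosed_bounded]
    refine ⟨hXclosed, ?_⟩
    apply Metric.isBounded_closedBall (x := (0 : Fin d → ℂ))
      (r := Real.sqrt ((‖L‖ + C) / π)) |>.subset
    rintro z hz
    have hzX : z ∈ X := hz
    have hzx : ∀ i, π * ‖z i‖ ^ 2 = L i - ∑ j, f ⟨z, hzX⟩ j * lam i j :=
      hfprop ⟨z, hzX⟩
    have hxΔ : f ⟨z, hzX⟩ ∈ Δ := by rw [← hrange]; exact ⟨⟨z, hzX⟩, rfl⟩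
    have hAb : ∀ i, |A (f ⟨z, hzX⟩) i| ≤ C := by
      intro i
      calc |A (f ⟨z, hzX⟩) i| ≤ ‖A (f ⟨z, hzX⟩)‖ := by
            simpa using norm_le_pi_norm (A (f ⟨z, hzX⟩)) i
        _ ≤ C := hC _ hxΔ
    have hbound : ∀ i, ‖z i‖ ≤ Real.sqrt ((‖L‖ + C) / π) := by
      intro i
      have h1 : π * ‖z i‖ ^ 2 ≤ ‖L‖ + C := by
        have hLi : |L i| ≤ ‖L‖ := by simpa using norm_le_pi_norm L i
        have := hzx i
        have hAi := hAb i
        rw [← hA] at this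
        calc π * ‖z i‖ ^ 2 = L i - A (f ⟨z, hzX⟩) i := this
          _ ≤ |L i| + |A (f ⟨z, hzX⟩) i| := by
              have := abs_sub (L i) (A (f ⟨z, hzX⟩) i)
              calc L i - A (f ⟨z, hzX⟩) i ≤ |L i - A (f ⟨z, hzX⟩) i| := le_abs_self _
                _ ≤ |L i| + |A (f ⟨z, hzX⟩) i| := abs_sub _ _
          _ ≤ ‖L‖ + C := add_le_add hLi hAi
      have h2 : ‖z i‖ ^ 2 ≤ (‖L‖ + C) / π := by
        rw [le_div_iff₀ pi_pos]; linarith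
      calc ‖z i‖ = Real.sqrt (‖z i‖ ^ 2) := (Real.sqrt_sq (norm_nonneg _)).symm
        _ ≤ Real.sqrt ((‖L‖ + C) / π) := Real.sqrt_le_sqrt h2
    rw [Metric.mem_closedBall, dist_zero_right]
    exact pi_norm_le_iff_of_nonneg (Real.sqrt_nonneg _) |>.mpr
      (fun i => by simpa using hbound i)
  -- nonempty iff
  have hne : X.Nonempty ↔ Δ.Nonempty := by
    constructor
    · rintro ⟨z, hz⟩
      refine ⟨f ⟨z, hz⟩, ?_⟩
      rw [← hrange]; exact ⟨⟨z, hz⟩, rfl⟩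
    · rintro ⟨x, hx⟩
      obtain ⟨z, hz⟩ := hconstruct x hx
      exact ⟨z, x, hz⟩
  exact ⟨ha, ⟨f, hfcont, hfprop, hrange⟩, hXclosed, hXcompact, hne⟩
end

section
/- Let λ₁,…,λ_d ∈ ℝⁿ and L ∈ ℝ^d, and let P = {x ∈ ℝⁿ : ⟨x, λ_i⟩ ≤ L_i for i = 1,…,d}. Assume P is compact, P has nonempty interior (i.e., there exists x₀ with ⟨x₀, λ_i⟩ < L_i for all i), and the presentation is strongly simple, meaning that for every x ∈ P the family of active normals {λ_i : ⟨x, λ_i⟩ = L_i} is linearly independent. Then there exists ε > 0 such that for all vectors λ'₁,…,λ'_d ∈ ℝⁿ with ‖λ'_i − λ_i‖ < ε for every i, the polyhedron P' = {x ∈ ℝⁿ : ⟨x, λ'_i⟩ ≤ L_i for all i} is compact, has nonempty interior, and for every x ∈ P' the family {λ'_i : ⟨x, λ'_i⟩ = L_i} is linearly independent. -/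
set_option maxHeartbeats 1600000


open scoped RealInnerProductSpace

/-- Cantor-style helper: a monotone family of closed sets, compact at level `1`,
whose intersection over levels `1/(m+1)` is empty, is empty at some positive level. -/
lemma exists_pos_eq_empty {X : Type*} [TopologicalSpace X] (t : ℝ → Set X)
    (hmono : ∀ {a b : ℝ}, a ≤ b → t a ⊆ t b)
    (hcl : ∀ a, IsClosed (t a)) (hcp : IsCompact (t 1))
    (hempty : (⋂ m : ℕ, t (1 / (m + 1))) = ∅) :
    ∃ r > 0, t r = ∅ := by
  by_contra h
  push_neg at h
  have hne : ∀ m : ℕ, (t (1 / (m + 1))).Nonempty := fun m =>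
    h _ (by positivity)
  have hsub : ∀ m : ℕ, t (1 / ((m : ℝ) + 1 + 1)) ⊆ t (1 / ((m : ℝ) + 1)) := fun m =>
    hmono (by
      apply one_div_le_one_div_of_le
      · positivity
      · linarith)
  have h0 : IsCompact (t (1 / ((0 : ℕ) + 1))) := by
    refine hcp.of_isClosed_subset (hcl _) (hmono (by norm_num))
  have := IsCompact.nonempty_iInter_of_sequence_nonempty_isCompact_isClosed
    (fun m : ℕ => t (1 / (m + 1)))
    (fun m => by push_cast; exact hsub m) hne h0 (fun m => hcl _)
  rw [hempty] at this
  exact Set.not_nonempty_empty this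

/-- Let `P = {x ∈ ℝⁿ | ⟨x, λᵢ⟩ ≤ Lᵢ ∀ i}` be compact with
nonempty interior, and strongly simple: at every `x ∈ P` the active normals
`{λᵢ | ⟨x, λᵢ⟩ = Lᵢ}` are linearly independent. Then there is `ε > 0` such
that for every perturbation `λ'` with `‖λ'ᵢ - λᵢ‖ < ε` for all `i`, the
polyhedron `P' = {x | ⟨x, λ'ᵢ⟩ ≤ Lᵢ ∀ i}` is compact, has nonempty interior,
and is strongly simple. -/
theorem simple_polytope_perturbation (n d : ℕ)
    (lam : Fin d → EuclideanSpace ℝ (Fin n)) (L : Fin d → ℝ)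
    (hcompact : IsCompact {x : EuclideanSpace ℝ (Fin n) | ∀ i, ⟪x, lam i⟫ ≤ L i})
    (hint : ∃ x₀ : EuclideanSpace ℝ (Fin n), ∀ i, ⟪x₀, lam i⟫ < L i)
    (hsimple : ∀ x ∈ {x : EuclideanSpace ℝ (Fin n) | ∀ i, ⟪x, lam i⟫ ≤ L i},
      LinearIndependent ℝ (fun i : {i : Fin d // ⟪x, lam i⟫ = L i} => lam i.1)) :
    ∃ ε > 0, ∀ lam' : Fin d → EuclideanSpace ℝ (Fin n),
      (∀ i, ‖lam' i - lam i‖ < ε) →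
      IsCompact {x : EuclideanSpace ℝ (Fin n) | ∀ i, ⟪x, lam' i⟫ ≤ L i} ∧
      (∃ x₀ : EuclideanSpace ℝ (Fin n), ∀ i, ⟪x₀, lam' i⟫ < L i) ∧
      ∀ x ∈ {x : EuclideanSpace ℝ (Fin n) | ∀ i, ⟪x, lam' i⟫ ≤ L i},
        LinearIndependent ℝ (fun i : {i : Fin d // ⟪x, lam' i⟫ = L i} => lam' i.1) := by
  classical
  obtain ⟨x₀, hx₀⟩ := hint
  -- trivial case `n = 0`: the ambient space is a subsingleton
  rcases Nat.eq_zero_or_pos n with hn | hn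
  · subst hn
    refine ⟨1, one_pos, fun lam' _ => ?_⟩
    have hl : lam' = lam := funext fun i => Subsingleton.elim _ _
    subst hl
    exact ⟨hcompact, ⟨x₀, hx₀⟩, hsimple⟩
  -- degenerate case `d = 0`: `P = univ` cannot be compact
  rcases Nat.eq_zero_or_pos d with hd | hd
  · exfalso
    subst hd
    have huniv : {x : EuclideanSpace ℝ (Fin n) | ∀ i, ⟪x, lam i⟫ ≤ L i} = Set.univ :=
      Set.eq_univ_of_forall fun x i => i.elim0
    rw [huniv] at hcompact
    obtain ⟨r, hr⟩ := hcompact.isBounded.subset_closedBall 0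
    set v : EuclideanSpace ℝ (Fin n) := EuclideanSpace.single ⟨0, hn⟩ (|r| + 1) with hv
    have hvn : ‖v‖ = |r| + 1 := by
      rw [hv, EuclideanSpace.norm_single]
      rw [Real.norm_eq_abs, abs_of_nonneg (by positivity)]
    have := hr (Set.mem_univ v)
    rw [Metric.mem_closedBall, dist_zero_right, hvn] at this
    have := le_abs_self r
    linarith
  haveI : Nonempty (Fin d) := ⟨⟨0, hd⟩⟩
  -- Step A1: a uniform positive lower bound on the sphere
  have hA1 : ∃ c > 0, ∀ u : EuclideanSpace ℝ (Fin n), ‖u‖ = 1 → ∃ i, c < ⟪u, lam i⟫ := by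
    obtain ⟨c, hc, hcE⟩ := exists_pos_eq_empty
      (fun r => {u : EuclideanSpace ℝ (Fin n) | ‖u‖ = 1 ∧ ∀ i, ⟪u, lam i⟫ ≤ r})
      (fun {a b} hab u hu => ⟨hu.1, fun i => (hu.2 i).trans hab⟩)
      (fun a => by
        have h1 : IsClosed {u : EuclideanSpace ℝ (Fin n) | ‖u‖ = 1} :=
          isClosed_eq continuous_norm continuous_const
        have h2 : IsClosed {u : EuclideanSpace ℝ (Fin n) | ∀ i, ⟪u, lam i⟫ ≤ a} := by
          have : {u : EuclideanSpace ℝ (Fin n) | ∀ i, ⟪u, lam i⟫ ≤ a}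
              = ⋂ i, {u | ⟪u, lam i⟫ ≤ a} := by
            ext u; simp only [Set.mem_iInter, Set.mem_setOf_eq]
          rw [this]
          exact isClosed_iInter fun i =>
            isClosed_le (Continuous.inner continuous_id continuous_const) continuous_const
        exact h1.inter h2)
      (by
        refine (isCompact_closedBall (0 : EuclideanSpace ℝ (Fin n)) 1).of_isClosed_subset
          ?_ (fun u hu => ?_)
        · have h1 : IsClosed {u : EuclideanSpace ℝ (Fin n) | ‖u‖ = 1} :=
            isClosed_eq continuous_norm continuous_const
          have h2 : IsClosed {u : EuclideanSpace ℝ (Fin n) | ∀ i, ⟪u, lam i⟫ ≤ 1} := by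
            have : {u : EuclideanSpace ℝ (Fin n) | ∀ i, ⟪u, lam i⟫ ≤ 1}
                = ⋂ i, {u | ⟪u, lam i⟫ ≤ 1} := by
              ext u; simp only [Set.mem_iInter, Set.mem_setOf_eq]
            rw [this]
            exact isClosed_iInter fun i =>
              isClosed_le (Continuous.inner continuous_id continuous_const) continuous_const
          exact h1.inter h2
        · rw [Metric.mem_closedBall, dist_zero_right]
          exact le_of_eq hu.1)
      (by
        rw [Set.eq_empty_iff_forall_notMem]
        intro u hu
        rw [Set.mem_iInter] at hu
        have hu1 : ‖u‖ = 1 := (hu 0).1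
        have hu2 : ∀ i, ⟪u, lam i⟫ ≤ 0 := by
          intro i
          refine le_of_forall_pos_le_add fun ε hε => ?_
          obtain ⟨m, hm⟩ := exists_nat_one_div_lt hε
          have := (hu m).2 i
          push_cast at this
          linarith
        obtain ⟨R₀, hR₀⟩ := hcompact.isBounded.subset_closedBall 0
        set T : ℝ := |R₀| + ‖x₀‖ + 1 with hT
        have hT0 : 0 < T := by positivity
        have hy : x₀ + T • u ∈ {x : EuclideanSpace ℝ (Fin n) | ∀ i, ⟪x, lam i⟫ ≤ L i} := by
          intro i
          have heq : ⟪x₀ + T • u, lam i⟫ = ⟪x₀, lam i⟫ + T * ⟪u, lam i⟫ := by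
            rw [inner_add_left, real_inner_smul_left]
          have h2 : T * ⟪u, lam i⟫ ≤ T * 0 := mul_le_mul_of_nonneg_left (hu2 i) hT0.le
          rw [heq]
          have := hx₀ i
          linarith
        have hmem := hR₀ hy
        rw [Metric.mem_closedBall, dist_zero_right] at hmem
        have htri : ‖T • u‖ ≤ ‖x₀ + T • u‖ + ‖x₀‖ := by
          have h9 := norm_sub_le (x₀ + T • u) x₀
          have h10 : x₀ + T • u - x₀ = T • u := by abel
          rwa [h10] at h9
        have hTu : ‖T • u‖ = T := by
          rw [norm_smul, hu1, mul_one, Real.norm_eq_abs, abs_of_pos hT0]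
        have := le_abs_self R₀
        rw [hTu] at htri
        linarith)
    refine ⟨c, hc, fun u hu => ?_⟩
    by_contra hcon
    push_neg at hcon
    rw [Set.eq_empty_iff_forall_notMem] at hcE
    exact hcE u ⟨hu, fun i => hcon i⟩
  obtain ⟨c, hc, hcS⟩ := hA1
  -- the uniform bound for perturbed polyhedra
  set M := Finset.univ.sup' Finset.univ_nonempty (fun i => |L i|) with hMdef
  have hM : ∀ i, L i ≤ M := fun i => by
    rw [hMdef]
    exact (le_abs_self _).trans (Finset.le_sup' (fun j => |L j|) (Finset.mem_univ i))
  have hM0 : 0 ≤ M := by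
    rw [hMdef]
    exact (abs_nonneg (L (Classical.arbitrary (Fin d)))).trans
      (Finset.le_sup' (fun j => |L j|) (Finset.mem_univ (Classical.arbitrary (Fin d))))
  set R := 2 * (M + 1) / c with hRdef
  have hR : 0 < R := by positivity
  have hbound : ∀ lam' : Fin d → EuclideanSpace ℝ (Fin n),
      (∀ i, ‖lam' i - lam i‖ ≤ c / 2) →
      ∀ x, (∀ i, ⟪x, lam' i⟫ ≤ L i) → ‖x‖ ≤ R := by
    intro lam' hl x hx
    rcases eq_or_ne x 0 with h0 | h0
    · rw [h0, norm_zero]; exact hR.le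
    have hxn : 0 < ‖x‖ := norm_pos_iff.mpr h0
    have hu : ‖(‖x‖⁻¹ • x : EuclideanSpace ℝ (Fin n))‖ = 1 := by
      rw [norm_smul, norm_inv, norm_norm, inv_mul_cancel₀ hxn.ne']
    obtain ⟨i, hi⟩ := hcS (‖x‖⁻¹ • x) hu
    rw [real_inner_smul_left] at hi
    have h1 : c * ‖x‖ < ⟪x, lam i⟫ := by
      have h := mul_lt_mul_of_pos_right hi hxn
      rwa [mul_comm (‖x‖⁻¹ * _) _, ← mul_assoc, mul_inv_cancel₀ hxn.ne', one_mul] at h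
    have h2 : ⟪x, lam i⟫ ≤ L i + ‖x‖ * (c / 2) := by
      have hsplit : ⟪x, lam i⟫ = ⟪x, lam' i⟫ + ⟪x, lam i - lam' i⟫ := by
        rw [inner_sub_right]; ring
      have hcs := real_inner_le_norm x (lam i - lam' i)
      have hnn : ‖lam i - lam' i‖ ≤ c / 2 := by rw [norm_sub_rev]; exact hl i
      have := mul_le_mul_of_nonneg_left hnn (norm_nonneg x)
      have := hx i
      linarith
    rw [hRdef, le_div_iff₀ hc]
    nlinarith [hM i]
  -- Step B: interior margin
  set δ := Finset.univ.inf' Finset.univ_nonempty (fun i => L i - ⟪x₀, lam i⟫) with hδdef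
  have hδ : 0 < δ := (Finset.lt_inf'_iff _).mpr fun i _ => sub_pos.mpr (hx₀ i)
  have hδle : ∀ i, δ ≤ L i - ⟪x₀, lam i⟫ := fun i => Finset.inf'_le _ (Finset.mem_univ i)
  -- Step C: key stability property for each potential active set
  have key : ∀ S : Finset (Fin d), ∃ r > 0, ∀ lam' : Fin d → EuclideanSpace ℝ (Fin n),
      (∀ i, ‖lam' i - lam i‖ < r) → ∀ x : EuclideanSpace ℝ (Fin n), ‖x‖ ≤ R →
      (∀ i, ⟪x, lam' i⟫ ≤ L i) → (∀ i ∈ S, ⟪x, lam' i⟫ = L i) →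
      LinearIndependent ℝ (fun i : S => lam' i.1) := by
    intro S
    by_cases hLI : LinearIndependent ℝ (fun i : S => lam i.1)
    · have hopen := isOpen_setOf_linearIndependent (𝕜 := ℝ)
        (E := EuclideanSpace ℝ (Fin n)) (ι := {i // i ∈ S})
      obtain ⟨r, hr, hball⟩ :=
        Metric.isOpen_iff.mp hopen (fun i : S => lam i.1) hLI
      refine ⟨r, hr, fun lam' hlam' x _ _ _ => ?_⟩
      refine hball ?_
      rw [Metric.mem_ball, dist_pi_lt_iff hr]
      intro b
      rw [dist_eq_norm]
      exact hlam' b.1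
    · have hFempty : ∀ x : EuclideanSpace ℝ (Fin n),
          (∀ i, ⟪x, lam i⟫ ≤ L i) → ¬ (∀ i ∈ S, ⟪x, lam i⟫ = L i) := by
        intro x hx hS
        refine hLI ?_
        have h := hsimple x hx
        have hinj : Function.Injective
            (fun i : S => (⟨i.1, hS i.1 i.2⟩ : {i : Fin d // ⟪x, lam i⟫ = L i})) := by
          intro a b hab
          simp only [Subtype.mk.injEq] at hab
          exact Subtype.ext hab
        exact h.comp _ hinj
      obtain ⟨r, hr, hre⟩ := exists_pos_eq_empty
        (fun r => {x : EuclideanSpace ℝ (Fin n) | ‖x‖ ≤ R ∧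
          (∀ i, ⟪x, lam i⟫ ≤ L i + r) ∧ ∀ i ∈ S, L i - r ≤ ⟪x, lam i⟫})
        (fun {a b} hab x hx =>
          ⟨hx.1, fun i => (hx.2.1 i).trans (by linarith),
            fun i hi => le_trans (by linarith) (hx.2.2 i hi)⟩)
        (fun a => by
          have h1 : IsClosed {x : EuclideanSpace ℝ (Fin n) | ‖x‖ ≤ R} :=
            isClosed_le continuous_norm continuous_const
          have h2 : IsClosed {x : EuclideanSpace ℝ (Fin n) | ∀ i, ⟪x, lam i⟫ ≤ L i + a} := by
            have : {x : EuclideanSpace ℝ (Fin n) | ∀ i, ⟪x, lam i⟫ ≤ L i + a}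
                = ⋂ i, {x | ⟪x, lam i⟫ ≤ L i + a} := by
              ext x; simp only [Set.mem_iInter, Set.mem_setOf_eq]
            rw [this]
            exact isClosed_iInter fun i =>
              isClosed_le (Continuous.inner continuous_id continuous_const) continuous_const
          have h3 : IsClosed {x : EuclideanSpace ℝ (Fin n) | ∀ i ∈ S, L i - a ≤ ⟪x, lam i⟫} := by
            have : {x : EuclideanSpace ℝ (Fin n) | ∀ i ∈ S, L i - a ≤ ⟪x, lam i⟫}
                = ⋂ i ∈ S, {x | L i - a ≤ ⟪x, lam i⟫} := by
              ext x; simp only [Set.mem_iInter, Set.mem_setOf_eq]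
            rw [this]
            exact isClosed_biInter fun i _ =>
              isClosed_le continuous_const (Continuous.inner continuous_id continuous_const)
          exact h1.inter (h2.inter h3))
        (by
          refine (isCompact_closedBall (0 : EuclideanSpace ℝ (Fin n)) R).of_isClosed_subset
            ?_ (fun x hx => ?_)
          · have h1 : IsClosed {x : EuclideanSpace ℝ (Fin n) | ‖x‖ ≤ R} :=
              isClosed_le continuous_norm continuous_const
            have h2 : IsClosed {x : EuclideanSpace ℝ (Fin n) | ∀ i, ⟪x, lam i⟫ ≤ L i + 1} := by
              have : {x : EuclideanSpace ℝ (Fin n) | ∀ i, ⟪x, lam i⟫ ≤ L i + 1}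
                  = ⋂ i, {x | ⟪x, lam i⟫ ≤ L i + 1} := by
                ext x; simp only [Set.mem_iInter, Set.mem_setOf_eq]
              rw [this]
              exact isClosed_iInter fun i =>
                isClosed_le (Continuous.inner continuous_id continuous_const) continuous_const
            have h3 : IsClosed {x : EuclideanSpace ℝ (Fin n) | ∀ i ∈ S, L i - 1 ≤ ⟪x, lam i⟫} := by
              have : {x : EuclideanSpace ℝ (Fin n) | ∀ i ∈ S, L i - 1 ≤ ⟪x, lam i⟫}
                  = ⋂ i ∈ S, {x | L i - 1 ≤ ⟪x, lam i⟫} := by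
                ext x; simp only [Set.mem_iInter, Set.mem_setOf_eq]
              rw [this]
              exact isClosed_biInter fun i _ =>
                isClosed_le continuous_const (Continuous.inner continuous_id continuous_const)
            exact h1.inter (h2.inter h3)
          · rw [Metric.mem_closedBall, dist_zero_right]
            exact hx.1)
        (by
          rw [Set.eq_empty_iff_forall_notMem]
          intro x hxm
          rw [Set.mem_iInter] at hxm
          have hx1 : ∀ i, ⟪x, lam i⟫ ≤ L i := by
            intro i
            refine le_of_forall_pos_le_add fun ε hε => ?_
            obtain ⟨m, hm⟩ := exists_nat_one_div_lt hε
            have := (hxm m).2.1 i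
            push_cast at this
            linarith
          have hx2 : ∀ i ∈ S, ⟪x, lam i⟫ = L i := by
            intro i hi
            refine le_antisymm (hx1 i) ?_
            refine le_of_forall_pos_le_add fun ε hε => ?_
            obtain ⟨m, hm⟩ := exists_nat_one_div_lt hε
            have := (hxm m).2.2 i hi
            push_cast at this
            linarith
          exact hFempty x hx1 hx2)
      refine ⟨r / (R + 1), by positivity, fun lam' hlam' x hxR hx hxS => ?_⟩
      exfalso
      rw [Set.eq_empty_iff_forall_notMem] at hre
      have h4 : R * (r / (R + 1)) ≤ r := by
        have h5 : R * (r / (R + 1)) ≤ (R + 1) * (r / (R + 1)) := by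
          apply mul_le_mul_of_nonneg_right (by linarith) (by positivity)
        have h6 : (R + 1) * (r / (R + 1)) = r := by field_simp
        linarith
      refine hre x ⟨hxR, fun i => ?_, fun i hi => ?_⟩
      · have hsplit : ⟪x, lam i⟫ = ⟪x, lam' i⟫ + ⟪x, lam i - lam' i⟫ := by
          rw [inner_sub_right]; ring
        have hcs := real_inner_le_norm x (lam i - lam' i)
        have hnn : ‖lam i - lam' i‖ ≤ r / (R + 1) := by
          rw [norm_sub_rev]; exact (hlam' i).le
        have h3 : ‖x‖ * ‖lam i - lam' i‖ ≤ R * (r / (R + 1)) :=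
          mul_le_mul hxR hnn (norm_nonneg _) hR.le
        have := hx i
        linarith
      · have hsplit : ⟪x, lam' i - lam i⟫ = ⟪x, lam' i⟫ - ⟪x, lam i⟫ := by
          rw [inner_sub_right]
        have hcs := real_inner_le_norm x (lam' i - lam i)
        have h3 : ‖x‖ * ‖lam' i - lam i‖ ≤ R * (r / (R + 1)) :=
          mul_le_mul hxR (hlam' i).le (norm_nonneg _) hR.le
        have := hxS i hi
        linarith
  choose rS hrS hkeyS using key
  set ε := min (min (c / 2) (δ / (‖x₀‖ + 1)))
    (Finset.univ.inf' ⟨∅, Finset.mem_univ ∅⟩ rS) with hεdef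
  have hεpos : 0 < ε :=
    lt_min (lt_min (by positivity) (by positivity))
      ((Finset.lt_inf'_iff _).mpr fun S _ => hrS S)
  refine ⟨ε, hεpos, fun lam' hlam' => ?_⟩
  have hlc : ∀ i, ‖lam' i - lam i‖ ≤ c / 2 := fun i =>
    ((hlam' i).trans_le ((min_le_left _ _).trans (min_le_left _ _))).le
  have hbd := hbound lam' hlc
  refine ⟨?_, ⟨x₀, fun i => ?_⟩, ?_⟩
  · -- compactness
    have hclosed : IsClosed {x : EuclideanSpace ℝ (Fin n) | ∀ i, ⟪x, lam' i⟫ ≤ L i} := by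
      have : {x : EuclideanSpace ℝ (Fin n) | ∀ i, ⟪x, lam' i⟫ ≤ L i}
          = ⋂ i, {x | ⟪x, lam' i⟫ ≤ L i} := by
        ext x; simp only [Set.mem_iInter, Set.mem_setOf_eq]
      rw [this]
      exact isClosed_iInter fun i =>
        isClosed_le (Continuous.inner continuous_id continuous_const) continuous_const
    exact (isCompact_closedBall (0 : EuclideanSpace ℝ (Fin n)) R).of_isClosed_subset hclosed
      (fun x hx => by rw [Metric.mem_closedBall, dist_zero_right]; exact hbd x hx)
  · -- nonempty interior
    have hsplit : ⟪x₀, lam' i⟫ = ⟪x₀, lam i⟫ + ⟪x₀, lam' i - lam i⟫ := by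
      rw [inner_sub_right]; ring
    have hcs := real_inner_le_norm x₀ (lam' i - lam i)
    have hεδ : ε ≤ δ / (‖x₀‖ + 1) := (min_le_left _ _).trans (min_le_right _ _)
    have h7 : ‖x₀‖ * ‖lam' i - lam i‖ ≤ ‖x₀‖ * (δ / (‖x₀‖ + 1)) :=
      mul_le_mul_of_nonneg_left ((hlam' i).le.trans hεδ) (norm_nonneg _)
    have h5 : ‖x₀‖ * (δ / (‖x₀‖ + 1)) < δ := by
      have h6 : ‖x₀‖ / (‖x₀‖ + 1) < 1 :=
        (div_lt_one (by positivity)).mpr (by linarith [norm_nonneg x₀])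
      have h8 : ‖x₀‖ * (δ / (‖x₀‖ + 1)) = δ * (‖x₀‖ / (‖x₀‖ + 1)) := by ring
      rw [h8]
      calc δ * (‖x₀‖ / (‖x₀‖ + 1)) < δ * 1 := mul_lt_mul_of_pos_left h6 hδ
        _ = δ := mul_one δ
    have := hδle i
    linarith
  · -- strong simplicity
    intro x hx
    set S : Finset (Fin d) := Finset.univ.filter (fun i => ⟪x, lam' i⟫ = L i) with hSdef
    have hεr : ε ≤ rS S := (min_le_right _ _).trans (Finset.inf'_le _ (Finset.mem_univ S))
    have hLI := hkeyS S lam' (fun i => (hlam' i).trans_le hεr) x (hbd x hx) hx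
      (fun i hi => (Finset.mem_filter.mp hi).2)
    have hmem : ∀ i : {i : Fin d // ⟪x, lam' i⟫ = L i}, i.1 ∈ S := fun i => by
      rw [hSdef]; exact Finset.mem_filter.mpr ⟨Finset.mem_univ _, i.2⟩
    refine hLI.comp (fun i => ⟨i.1, hmem i⟩) fun a b hab => ?_
    have h := congrArg (fun z : {j // j ∈ S} => z.1) hab
    exact Subtype.ext h
end

section
/- Let λ₁,…,λ_d ∈ ℝⁿ and L ∈ ℝ^d be such that P = {x ∈ ℝⁿ : ⟨x, λ_i⟩ ≤ L_i for all i} is compact, has nonempty interior, and satisfies: for every x ∈ P the active normals {λ_i : ⟨x, λ_i⟩ = L_i} are linearly independent. Then there exist vectors λ'₁,…,λ'_d ∈ ℚⁿ such that, setting λ_i^τ = (1−τ)λ_i + τλ'_i for τ ∈ [0,1], each polytope P^τ = {x ∈ ℝⁿ : ⟨x, λ_i^τ⟩ ≤ L_i for all i} is compact, has nonempty interior, and has linearly independent active normals at every point. In particular, after rescaling each pair (λ'_i, L_i) by a suitable positive rational — which does not change the polytope P¹ — one may take λ'_i ∈ ℤⁿ, so that P deforms through simple compact polytopes, along an affine path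 of facet normals, to a polytope rational with respect to ℤⁿ. -/
open scoped RealInnerProductSpace
open Metric Bornology

set_option maxHeartbeats 1000000 in
private lemma key_lemma {n d : ℕ} (lam : Fin d → EuclideanSpace ℝ (Fin n)) (L : Fin d → ℝ)
    (hcompact : IsCompact {x : EuclideanSpace ℝ (Fin n) | ∀ i, ⟪x, lam i⟫ ≤ L i})
    (hint : ∃ x₀ : EuclideanSpace ℝ (Fin n), ∀ i, ⟪x₀, lam i⟫ < L i)
    (hsimple : ∀ x ∈ {x : EuclideanSpace ℝ (Fin n) | ∀ i, ⟪x, lam i⟫ ≤ L i},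
      LinearIndependent ℝ (fun i : {i : Fin d // ⟪x, lam i⟫ = L i} => lam i.1)) :
    ∃ ε > (0:ℝ), ∀ μ : Fin d → EuclideanSpace ℝ (Fin n), (∀ i, ‖μ i - lam i‖ ≤ ε) →
      IsCompact {x : EuclideanSpace ℝ (Fin n) | ∀ i, ⟪x, μ i⟫ ≤ L i} ∧
      (∃ y₀ : EuclideanSpace ℝ (Fin n), ∀ i, ⟪y₀, μ i⟫ < L i) ∧
      ∀ y ∈ {x : EuclideanSpace ℝ (Fin n) | ∀ i, ⟪x, μ i⟫ ≤ L i},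
        LinearIndependent ℝ (fun i : {i : Fin d // ⟪y, μ i⟫ = L i} => μ i.1) := by
  classical
  obtain ⟨x₀, hx₀⟩ := hint
  have hclosed : ∀ μ : Fin d → EuclideanSpace ℝ (Fin n),
      IsClosed {x : EuclideanSpace ℝ (Fin n) | ∀ i, ⟪x, μ i⟫ ≤ L i} := by
    intro μ
    have : {x : EuclideanSpace ℝ (Fin n) | ∀ i, ⟪x, μ i⟫ ≤ L i}
        = ⋂ i, {x : EuclideanSpace ℝ (Fin n) | ⟪x, μ i⟫ ≤ L i} := by
      ext x; simp [Set.mem_iInter]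
    rw [this]
    exact isClosed_iInter fun i =>
      isClosed_le (Continuous.inner continuous_id continuous_const) continuous_const
  rcases Nat.eq_zero_or_pos d with hd | hd
  · subst hd
    refine ⟨1, one_pos, fun μ _ => ?_⟩
    have hset : {x : EuclideanSpace ℝ (Fin n) | ∀ i, ⟪x, μ i⟫ ≤ L i}
        = {x : EuclideanSpace ℝ (Fin n) | ∀ i, ⟪x, lam i⟫ ≤ L i} :=
      Set.ext fun x => ⟨fun _ i => i.elim0, fun _ i => i.elim0⟩
    refine ⟨hset ▸ hcompact, ⟨x₀, fun i => i.elim0⟩, fun y _ => ?_⟩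
    have : IsEmpty {i : Fin 0 // ⟪y, μ i⟫ = L i} := ⟨fun i => i.1.elim0⟩
    exact linearIndependent_empty_type
  haveI : Nonempty (Fin d) := Fin.pos_iff_nonempty.mp hd
  have hne : (Finset.univ : Finset (Fin d)).Nonempty := Finset.univ_nonempty
  set δ : Fin d → ℝ := fun i => L i - ⟪x₀, lam i⟫ with hδdef
  have hδ : ∀ i, 0 < δ i := fun i => sub_pos.mpr (hx₀ i)
  set δ₀ : ℝ := Finset.univ.inf' hne δ with hδ₀def
  have hδ₀ : 0 < δ₀ := (Finset.lt_inf'_iff hne).2 fun i _ => hδ i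
  have hδ₀le : ∀ i, δ₀ ≤ δ i := fun i => Finset.inf'_le _ (Finset.mem_univ i)
  have hx₀P : ∀ i, ⟪x₀, lam i⟫ ≤ L i := fun i => (hx₀ i).le
  obtain ⟨R, hR0, hRsub⟩ := hcompact.isBounded.subset_closedBall_lt 0 x₀
  set M : ℝ := R + 1 with hMdef
  have hM : 0 < M := by linarith
  set M' : ℝ := 2 * M + ‖x₀‖ with hM'def
  have hM' : 0 < M' := by have := norm_nonneg x₀; simp only [hM'def]; linarith
  have hyM' : ∀ y : EuclideanSpace ℝ (Fin n), y ∈ closedBall x₀ (2 * M) → ‖y‖ ≤ M' := by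
    intro y hy
    rw [mem_closedBall, dist_eq_norm] at hy
    calc ‖y‖ = ‖y - x₀ + x₀‖ := by rw [sub_add_cancel]
    _ ≤ ‖y - x₀‖ + ‖x₀‖ := norm_add_le _ _
    _ ≤ M' := by simp only [hM'def]; linarith
  set ε₁ : ℝ := δ₀ / (2 * (M + ‖x₀‖ + 1)) with hε₁def
  have hε₁pos : 0 < ε₁ := by
    have := norm_nonneg x₀; apply div_pos hδ₀; linarith
  -- boundedness
  have BND : ∀ μ : Fin d → EuclideanSpace ℝ (Fin n), (∀ i, ‖μ i - lam i‖ ≤ ε₁) →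
      ∀ y : EuclideanSpace ℝ (Fin n), (∀ i, ⟪y, μ i⟫ ≤ L i) → y ∈ closedBall x₀ (2 * M) := by
    intro μ hμ y hy
    rw [mem_closedBall, dist_eq_norm]
    by_contra hcon
    push_neg at hcon
    set D : ℝ := ‖y - x₀‖ with hDdef
    have hD : 2 * M < D := hcon
    have hDpos : 0 < D := by linarith
    set t : ℝ := M / D with htdef
    have ht0 : 0 < t := div_pos hM hDpos
    have htD : t * D = M := div_mul_cancel₀ M hDpos.ne'
    have ht2 : t < 1 / 2 := by
      rw [htdef, div_lt_div_iff₀ hDpos two_pos]; linarith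
    set z : EuclideanSpace ℝ (Fin n) := x₀ + t • (y - x₀) with hzdef
    have hzP : ∀ i, ⟪z, lam i⟫ ≤ L i := by
      intro i
      have hinner : ⟪z, lam i⟫ = (1 - t) * ⟪x₀, lam i⟫ + t * ⟪y, lam i⟫ := by
        simp only [hzdef, inner_add_left, real_inner_smul_left, inner_sub_left]
        ring
      have hylam : ⟪y, lam i⟫ ≤ L i + ‖y‖ * ε₁ := by
        have h1 : ⟪y, lam i⟫ = ⟪y, μ i⟫ + ⟪y, lam i - μ i⟫ := by
          rw [inner_sub_right]; ring
        have h2 : ⟪y, lam i - μ i⟫ ≤ ‖y‖ * ‖lam i - μ i‖ := real_inner_le_norm _ _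
        have h3 : ‖lam i - μ i‖ ≤ ε₁ := by rw [norm_sub_rev]; exact hμ i
        have h4 : ‖y‖ * ‖lam i - μ i‖ ≤ ‖y‖ * ε₁ :=
          mul_le_mul_of_nonneg_left h3 (norm_nonneg y)
        have := hy i
        linarith
      have hty : t * ‖y‖ ≤ M + ‖x₀‖ := by
        have h5 : ‖y‖ ≤ D + ‖x₀‖ := by
          calc ‖y‖ = ‖y - x₀ + x₀‖ := by rw [sub_add_cancel]
          _ ≤ ‖y - x₀‖ + ‖x₀‖ := norm_add_le _ _
        have h6 : t * ‖y‖ ≤ t * (D + ‖x₀‖) := mul_le_mul_of_nonneg_left h5 ht0.le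
        have h7 : t * ‖x₀‖ ≤ 1 * ‖x₀‖ :=
          mul_le_mul_of_nonneg_right (by linarith) (norm_nonneg x₀)
        nlinarith
      have hδi : ⟪x₀, lam i⟫ = L i - δ i := by simp [hδdef]
      have hδ₀i := hδ₀le i
      have hε₁mul : ε₁ * (2 * (M + ‖x₀‖ + 1)) = δ₀ := by
        rw [hε₁def]; field_simp
      have hn0 := norm_nonneg x₀
      have hn1 := norm_nonneg y
      rw [hinner, hδi]
      nlinarith [mul_le_mul_of_nonneg_left hylam ht0.le, hδ i]
    have hzball := hRsub hzP
    rw [mem_closedBall, dist_eq_norm] at hzball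
    have : ‖z - x₀‖ = M := by
      have : z - x₀ = t • (y - x₀) := by rw [hzdef]; abel
      rw [this, norm_smul, Real.norm_eq_abs, abs_of_pos ht0, ← hDdef, htD]
    rw [this] at hzball
    simp only [hMdef] at hzball
    linarith
  -- interior point persists
  have INT : ∀ μ : Fin d → EuclideanSpace ℝ (Fin n), (∀ i, ‖μ i - lam i‖ ≤ ε₁) →
      ∀ i, ⟪x₀, μ i⟫ < L i := by
    intro μ hμ i
    have h1 : ⟪x₀, μ i⟫ = ⟪x₀, lam i⟫ + ⟪x₀, μ i - lam i⟫ := by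
      rw [inner_sub_right]; ring
    have h2 : ⟪x₀, μ i - lam i⟫ ≤ ‖x₀‖ * ‖μ i - lam i‖ := real_inner_le_norm _ _
    have h3 : ‖x₀‖ * ‖μ i - lam i‖ ≤ ‖x₀‖ * ε₁ := mul_le_mul_of_nonneg_left (hμ i) (norm_nonneg _)
    have h4 : ‖x₀‖ * ε₁ < δ₀ := by
      rw [hε₁def]
      have hn0 := norm_nonneg x₀
      rw [mul_div_assoc']
      rw [div_lt_iff₀ (by linarith)]
      nlinarith
    have h5 := hδ₀le i
    have h6 : ⟪x₀, lam i⟫ = L i - δ i := by simp [hδdef]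
    linarith
  have hδ₀le' : ∀ i, δ₀ ≤ L i - ⟪x₀, lam i⟫ := fun i => hδ₀le i
  have LOC : ∀ p : {x : EuclideanSpace ℝ (Fin n) // ∀ i, ⟪x, lam i⟫ ≤ L i},
      ∃ r > (0:ℝ), ∃ e > (0:ℝ), ∀ μ : Fin d → EuclideanSpace ℝ (Fin n),
        (∀ i, ‖μ i - lam i‖ ≤ e) →
        (LinearIndependent ℝ (fun i : {i : Fin d // ⟪p.1, lam i⟫ = L i} => μ i.1)) ∧
        ∀ y : EuclideanSpace ℝ (Fin n), ‖y - p.1‖ ≤ r →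
          ∀ i, ⟪p.1, lam i⟫ ≠ L i → ⟪y, μ i⟫ < L i := by
    intro p
    obtain ⟨x, hx⟩ := p
    simp only
    -- part (a): independence is stable
    have hli := hsimple x hx
    have hev := hli.eventually
    rw [Metric.eventually_nhds_iff] at hev
    obtain ⟨εa, hεa, Ha⟩ := hev
    -- part (b): constants
    set K : ℝ := (Finset.univ.sup' hne fun i => ‖lam i‖) + 1 with hKdef
    have hK : ∀ i, ‖lam i‖ + 1 ≤ K := fun i => by
      have := Finset.le_sup' (fun i => ‖lam i‖) (Finset.mem_univ i); simp only [hKdef]; linarith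
    have hKpos : 0 < K := lt_of_lt_of_le (by positivity) (hK ⟨0, hd⟩)
    set g : Fin d → ℝ := fun i => if ⟪x, lam i⟫ = L i then 1 else L i - ⟪x, lam i⟫ with hgdef
    have hg : ∀ i, 0 < g i := by
      intro i
      simp only [hgdef]
      split
      · exact one_pos
      · next h => exact sub_pos.mpr (lt_of_le_of_ne (hx i) h)
    set G : ℝ := Finset.univ.inf' hne g with hGdef
    have hG : 0 < G := (Finset.lt_inf'_iff hne).2 fun i _ => hg i
    have hGle : ∀ i, ⟪x, lam i⟫ ≠ L i → G ≤ L i - ⟪x, lam i⟫ := by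
      intro i hi
      have := Finset.inf'_le g (Finset.mem_univ i)
      simpa only [← hGdef, hgdef, if_neg hi] using this
    refine ⟨G / (4 * K), by positivity,
      min (εa / 2) (min 1 (G / (4 * (‖x‖ + 1)))), by positivity, fun μ hμ => ?_⟩
    have hμa : ∀ i, ‖μ i - lam i‖ ≤ εa / 2 := fun i => (hμ i).trans (min_le_left _ _)
    have hμ1 : ∀ i, ‖μ i - lam i‖ ≤ 1 := fun i => (hμ i).trans ((min_le_right _ _).trans (min_le_left _ _))
    have hμG : ∀ i, ‖μ i - lam i‖ ≤ G / (4 * (‖x‖ + 1)) :=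
      fun i => (hμ i).trans ((min_le_right _ _).trans (min_le_right _ _))
    constructor
    · apply Ha
      rw [dist_pi_lt_iff hεa]
      intro b
      rw [dist_eq_norm]
      exact lt_of_le_of_lt (hμa b.1) (by linarith)
    · intro y hy i hi
      have h1 : ⟪y, μ i⟫ = ⟪x, lam i⟫ + ⟪y - x, μ i⟫ + ⟪x, μ i - lam i⟫ := by
        rw [inner_sub_left, inner_sub_right]; ring
      have hμK : ‖μ i‖ ≤ K := by
        have : ‖μ i‖ ≤ ‖μ i - lam i‖ + ‖lam i‖ := by
          calc ‖μ i‖ = ‖μ i - lam i + lam i‖ := by rw [sub_add_cancel]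
          _ ≤ _ := norm_add_le _ _
        have := hμ1 i
        have := hK i
        linarith
      have h2 : ⟪y - x, μ i⟫ ≤ G / 4 := by
        have := real_inner_le_norm (y - x) (μ i)
        have hmm : ‖y - x‖ * ‖μ i‖ ≤ (G / (4 * K)) * K := by
          apply mul_le_mul hy hμK (norm_nonneg _) (by positivity)
        have : (G / (4 * K)) * K = G / 4 := by field_simp
        linarith
      have h3 : ⟪x, μ i - lam i⟫ ≤ G / 4 := by
        have hcs := real_inner_le_norm x (μ i - lam i)
        have hxn : 0 ≤ ‖x‖ := norm_nonneg x
        have hmm : ‖x‖ * ‖μ i - lam i‖ ≤ ‖x‖ * (G / (4 * (‖x‖ + 1))) :=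
          mul_le_mul_of_nonneg_left (hμG i) hxn
        have : ‖x‖ * (G / (4 * (‖x‖ + 1))) ≤ G / 4 := by
          rw [mul_div_assoc', div_le_div_iff₀ (by positivity) (by positivity)]
          nlinarith
        linarith
      have h4 := hGle i hi
      linarith
  choose r hr e he H using LOC
  have hcov : {x : EuclideanSpace ℝ (Fin n) | ∀ i, ⟪x, lam i⟫ ≤ L i} ⊆
      ⋃ p : {x : EuclideanSpace ℝ (Fin n) // ∀ i, ⟪x, lam i⟫ ≤ L i}, ball p.1 (r p / 2) := by
    intro x hx
    exact Set.mem_iUnion.2 ⟨⟨x, hx⟩, by simp [mem_ball, half_pos (hr ⟨x, hx⟩)]⟩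
  obtain ⟨t, htsub⟩ := hcompact.elim_finite_subcover _ (fun p => isOpen_ball) hcov
  have htne : t.Nonempty := by
    have hx₀P : ∀ i, ⟪x₀, lam i⟫ ≤ L i := fun i => (hx₀ i).le
    have := htsub hx₀P
    obtain ⟨p, hp, -⟩ := Set.mem_iUnion₂.1 this
    exact ⟨p, hp⟩
  set rmin : ℝ := t.inf' htne (fun p => r p / 2) with hrmindef
  have hrmin : 0 < rmin := (Finset.lt_inf'_iff htne).2 fun p _ => half_pos (hr p)
  set emin : ℝ := t.inf' htne e with hemindef
  have hemin : 0 < emin := (Finset.lt_inf'_iff htne).2 fun p _ => he p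
  set ε : ℝ := min ε₁ (min emin (min (δ₀ / (2 * M')) (rmin * δ₀ / (4 * M * M')))) with hεdef
  have hεpos : 0 < ε := by
    apply lt_min hε₁pos
    apply lt_min hemin
    exact lt_min (by positivity) (by positivity)
  refine ⟨ε, hεpos, fun μ hμ => ?_⟩
  have hμ1 : ∀ i, ‖μ i - lam i‖ ≤ ε₁ := fun i => (hμ i).trans (min_le_left _ _)
  have hμe : ∀ i, ‖μ i - lam i‖ ≤ emin :=
    fun i => (hμ i).trans ((min_le_right _ _).trans (min_le_left _ _))
  have hεM' : ε ≤ δ₀ / (2 * M') :=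
    (min_le_right _ _).trans ((min_le_right _ _).trans (min_le_left _ _))
  have hεr : ε ≤ rmin * δ₀ / (4 * M * M') :=
    (min_le_right _ _).trans ((min_le_right _ _).trans (min_le_right _ _))
  refine ⟨isCompact_of_isClosed_isBounded (hclosed μ)
      (isBounded_closedBall.subset fun y hy => BND μ hμ1 y hy),
    ⟨x₀, INT μ hμ1⟩, fun y hy => ?_⟩
  have hyB := BND μ hμ1 y hy
  have hynorm := hyM' y hyB
  have hyx₀ : ‖y - x₀‖ ≤ 2 * M := by rwa [mem_closedBall, dist_eq_norm] at hyB
  set tp : ℝ := 2 * M' * ε / δ₀ with htpdef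
  have htp0 : 0 ≤ tp := by positivity
  have htpδ : tp * δ₀ = 2 * M' * ε := div_mul_cancel₀ _ hδ₀.ne'
  have htp1 : tp ≤ 1 := by
    rw [htpdef, div_le_one hδ₀]
    have := (le_div_iff₀ (by positivity : (0:ℝ) < 2 * M')).1 hεM'
    nlinarith
  set z : EuclideanSpace ℝ (Fin n) := x₀ + (1 - tp) • (y - x₀) with hzdef
  have hzP : ∀ i, ⟪z, lam i⟫ ≤ L i := by
    intro i
    have hinner : ⟪z, lam i⟫ = tp * ⟪x₀, lam i⟫ + (1 - tp) * ⟪y, lam i⟫ := by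
      simp only [hzdef, inner_add_left, real_inner_smul_left, inner_sub_left]
      ring
    have hylam : ⟪y, lam i⟫ ≤ L i + M' * ε := by
      have h1 : ⟪y, lam i⟫ = ⟪y, μ i⟫ + ⟪y, lam i - μ i⟫ := by rw [inner_sub_right]; ring
      have h2 : ⟪y, lam i - μ i⟫ ≤ ‖y‖ * ‖lam i - μ i‖ := real_inner_le_norm _ _
      have h3 : ‖lam i - μ i‖ ≤ ε := by rw [norm_sub_rev]; exact hμ i
      have h4 : ‖y‖ * ‖lam i - μ i‖ ≤ M' * ε := by
        apply mul_le_mul hynorm h3 (norm_nonneg _) hM'.le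
      have := hy i
      linarith
    have h5 := hδ₀le' i
    have h6 : tp * ⟪x₀, lam i⟫ ≤ tp * (L i - δ₀) :=
      mul_le_mul_of_nonneg_left (by linarith) htp0
    have h7 : (1 - tp) * ⟪y, lam i⟫ ≤ (1 - tp) * (L i + M' * ε) :=
      mul_le_mul_of_nonneg_left hylam (by linarith)
    rw [hinner]
    nlinarith [h6, h7, htpδ, mul_nonneg htp0 (mul_nonneg hM'.le hεpos.le)]
  have hdistyz : ‖y - z‖ ≤ rmin := by
    have hyz : y - z = tp • (y - x₀) := by
      simp only [hzdef, sub_smul, one_smul]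
      abel
    have hε4 : ε * (4 * M * M') ≤ rmin * δ₀ := by
      rw [← le_div_iff₀ (by positivity)]; exact hεr
    rw [hyz, norm_smul, Real.norm_eq_abs, abs_of_nonneg htp0]
    have h6 : tp * ‖y - x₀‖ ≤ tp * (2 * M) := mul_le_mul_of_nonneg_left hyx₀ htp0
    have h7 : tp * (2 * M) ≤ rmin := by
      rw [htpdef, div_mul_eq_mul_div, div_le_iff₀ hδ₀]
      nlinarith
    linarith
  obtain ⟨p, hp, hpz⟩ := Set.mem_iUnion₂.1 (htsub hzP)
  rw [mem_ball, dist_eq_norm] at hpz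
  have hrminle : rmin ≤ r p / 2 := Finset.inf'_le _ hp
  have hyp : ‖y - p.1‖ ≤ r p := by
    have := norm_sub_le_norm_sub_add_norm_sub y z p.1
    linarith
  have hεe : ∀ i, ‖μ i - lam i‖ ≤ e p := fun i => (hμe i).trans (Finset.inf'_le _ hp)
  obtain ⟨hLI, hinact⟩ := H p μ hεe
  have hsub : ∀ j : {i : Fin d // ⟪y, μ i⟫ = L i}, ⟪p.1, lam j.1⟫ = L j.1 := by
    intro j
    by_contra hcon
    exact absurd j.2 (ne_of_lt (hinact y hyp j.1 hcon))
  have hinj : Function.Injective (fun j : {i : Fin d // ⟪y, μ i⟫ = L i} =>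
      (⟨j.1, hsub j⟩ : {i : Fin d // ⟪p.1, lam i⟫ = L i})) :=
    fun a b hab => Subtype.ext (Subtype.mk_eq_mk.mp hab)
  exact hLI.comp _ hinj

/-- Let `P = {x ∈ ℝⁿ | ⟨x, λᵢ⟩ ≤ Lᵢ ∀ i}` be compact with
nonempty interior and strongly simple (linearly independent active normals at
every point). Then there are rational vectors `λ'₁, …, λ'_d ∈ ℚⁿ` such that
with `λᵢ^τ = (1-τ)λᵢ + τλ'ᵢ`, every polytope `P^τ`, `τ ∈ [0,1]`, is compact,
has nonempty interior, and is strongly simple. In particular, rescaling each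
pair `(λ'ᵢ, Lᵢ)` by a positive rational — which does not change `P¹` — one may
take `λ'ᵢ ∈ ℤⁿ`, so `P` deforms through simple compact polytopes to a polytope
rational with respect to `ℤⁿ`. -/
theorem simple_polytope_deformation_to_rational (n d : ℕ)
    (lam : Fin d → EuclideanSpace ℝ (Fin n)) (L : Fin d → ℝ)
    (hcompact : IsCompact {x : EuclideanSpace ℝ (Fin n) | ∀ i, ⟪x, lam i⟫ ≤ L i})
    (hint : ∃ x₀ : EuclideanSpace ℝ (Fin n), ∀ i, ⟪x₀, lam i⟫ < L i)
    (hsimple : ∀ x ∈ {x : EuclideanSpace ℝ (Fin n) | ∀ i, ⟪x, lam i⟫ ≤ L i},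
      LinearIndependent ℝ (fun i : {i : Fin d // ⟪x, lam i⟫ = L i} => lam i.1)) :
    ∃ lam' : Fin d → EuclideanSpace ℝ (Fin n),
      (∀ i j, ∃ q : ℚ, lam' i j = (q : ℝ)) ∧
      (∀ τ ∈ Set.Icc (0 : ℝ) 1,
        IsCompact {x : EuclideanSpace ℝ (Fin n) |
            ∀ i, ⟪x, (1 - τ) • lam i + τ • lam' i⟫ ≤ L i} ∧
        (∃ x₀ : EuclideanSpace ℝ (Fin n), ∀ i, ⟪x₀, (1 - τ) • lam i + τ • lam' i⟫ < L i) ∧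
        (∀ x ∈ {x : EuclideanSpace ℝ (Fin n) | ∀ i, ⟪x, (1 - τ) • lam i + τ • lam' i⟫ ≤ L i},
          LinearIndependent ℝ
            (fun i : {i : Fin d // ⟪x, (1 - τ) • lam i + τ • lam' i⟫ = L i} =>
              (1 - τ) • lam i.1 + τ • lam' i.1))) ∧
      ∃ c : Fin d → ℚ, (∀ i, 0 < c i) ∧
        (∀ i j, ∃ m : ℤ, (c i : ℝ) * lam' i j = (m : ℝ)) ∧
        {x : EuclideanSpace ℝ (Fin n) | ∀ i, ⟪x, (c i : ℝ) • lam' i⟫ ≤ (c i : ℝ) * L i}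
          = {x : EuclideanSpace ℝ (Fin n) | ∀ i, ⟪x, lam' i⟫ ≤ L i} := by
  obtain ⟨ε, hε, KEY⟩ := key_lemma lam L hcompact hint hsimple
  obtain ⟨N, hN⟩ := exists_nat_gt (((n : ℝ) + 1) / ε)
  have hNpos : 0 < (N : ℝ) := lt_of_le_of_lt (by positivity) hN
  have hN0 : 0 < N := by exact_mod_cast hNpos
  set lam' : Fin d → EuclideanSpace ℝ (Fin n) := fun i =>
    (WithLp.equiv 2 (Fin n → ℝ)).symm (fun j => ((round (lam i j * N) : ℤ) : ℝ) / N) with hlam'def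
  have hlam'app : ∀ i j, lam' i j = ((round (lam i j * N) : ℤ) : ℝ) / N := fun i j => rfl
  -- coordinatewise approximation
  have hcoord : ∀ i j, |lam' i j - lam i j| ≤ ε / ((n : ℝ) + 1) := by
    intro i j
    rw [hlam'app]
    have h1 : |lam i j * N - round (lam i j * N)| ≤ 1 / 2 := abs_sub_round _
    have h2 : ((round (lam i j * N) : ℤ) : ℝ) / N - lam i j
        = -(lam i j * N - round (lam i j * N)) / N := by field_simp; ring
    rw [h2, abs_div, abs_neg, abs_of_pos hNpos]
    have h3 : |lam i j * ↑N - ↑(round (lam i j * ↑N))| / (N:ℝ) ≤ (1/2) / N := by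
      apply div_le_div_of_nonneg_right h1 hNpos.le
    have h4 : (1/2 : ℝ) / N ≤ ε / ((n : ℝ) + 1) := by
      rw [div_le_div_iff₀ hNpos (by positivity)]
      have h5 : (n : ℝ) + 1 < N * ε := by
        rw [div_lt_iff₀ hε] at hN; linarith
      nlinarith [Nat.cast_nonneg (α := ℝ) n]
    linarith
  -- norm approximation
  have hclose : ∀ i, ‖lam' i - lam i‖ ≤ ε := by
    intro i
    have hnn : (0:ℝ) ≤ ε / ((n : ℝ) + 1) := by positivity
    rw [EuclideanSpace.norm_eq]
    have hsum : (∑ j, ‖(lam' i - lam i) j‖ ^ 2) ≤ (n : ℝ) * (ε / ((n : ℝ) + 1)) ^ 2 := by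
      calc (∑ j, ‖(lam' i - lam i) j‖ ^ 2) ≤ ∑ _j : Fin n, (ε / ((n : ℝ) + 1)) ^ 2 := by
            apply Finset.sum_le_sum
            intro j _
            have : ‖(lam' i - lam i) j‖ = |lam' i j - lam i j| := by
              rw [Real.norm_eq_abs]
              congr 1
            rw [this]
            exact pow_le_pow_left₀ (abs_nonneg _) (hcoord i j) 2
      _ = (n : ℝ) * (ε / ((n : ℝ) + 1)) ^ 2 := by
            rw [Finset.sum_const, Finset.card_univ, Fintype.card_fin, nsmul_eq_mul]
    have hle : (n : ℝ) * (ε / ((n : ℝ) + 1)) ^ 2 ≤ ε ^ 2 := by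
      rw [div_pow]
      rw [mul_div_assoc', div_le_iff₀ (by positivity)]
      nlinarith [sq_nonneg ε, Nat.cast_nonneg (α := ℝ) n,
        mul_nonneg (mul_nonneg (sq_nonneg ε) (Nat.cast_nonneg (α := ℝ) n)) (Nat.cast_nonneg (α := ℝ) n),
        mul_nonneg (sq_nonneg ε) (Nat.cast_nonneg (α := ℝ) n)]
    calc √(∑ j, ‖(lam' i - lam i) j‖ ^ 2) ≤ √(ε ^ 2) :=
          Real.sqrt_le_sqrt (hsum.trans hle)
    _ = ε := Real.sqrt_sq hε.le
  refine ⟨lam', ?_, ?_, ?_⟩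
  · intro i j
    refine ⟨(round (lam i j * N) : ℚ) / N, ?_⟩
    rw [hlam'app]; push_cast; ring
  · intro τ hτ
    obtain ⟨hτ0, hτ1⟩ := hτ
    have hμ : ∀ i, ‖((1 - τ) • lam i + τ • lam' i) - lam i‖ ≤ ε := by
      intro i
      have heq : ((1 - τ) • lam i + τ • lam' i) - lam i = τ • (lam' i - lam i) := by
        rw [sub_smul, one_smul, smul_sub]; abel
      rw [heq, norm_smul, Real.norm_eq_abs, abs_of_nonneg hτ0]
      calc τ * ‖lam' i - lam i‖ ≤ 1 * ε :=
            mul_le_mul hτ1 (hclose i) (norm_nonneg _) zero_le_one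
      _ = ε := one_mul ε
    exact KEY _ hμ
  · refine ⟨fun _ => (N : ℚ), fun i => by show (0:ℚ) < (N:ℚ); exact_mod_cast hN0, fun i j => ?_, ?_⟩
    · refine ⟨round (lam i j * N), ?_⟩
      rw [hlam'app]
      push_cast
      field_simp
    · ext x
      simp only [Set.mem_setOf_eq]
      apply forall_congr'
      intro i
      rw [real_inner_smul_right]
      constructor
      · intro h
        have hq : ((N : ℚ) : ℝ) = (N : ℝ) := by push_cast; ring
        rw [hq] at h
        nlinarith
      · intro h
        have hq : ((N : ℚ) : ℝ) = (N : ℝ) := by push_cast; ring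
        rw [hq]
        nlinarith
end
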